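/- Let U ⊆ ℝ^n be open, let L be a smooth field of n×n real matrices on U such that L(u) is invertible for every u ∈ U and the Nijenhuis torsion of L vanishes on U, and let V be a smooth real-valued function on U. Then the following are equivalent: (a) ∂_i(Σ_s L^s_j ∂_s V) = ∂_j(Σ_s L^s_i ∂_s V) on U for all i, j ∈ {1,…,n} (i.e. d d_L V = 0); (b) ∂_i(Σ_s (L^{-1})^s_j ∂_s V) = ∂_j(Σ_s (L^{-1})^s_i ∂_s V) on U for all i, j ∈ {1,…,n} (i.e. d d_{L^{-1}} V = 0), where L^{-1} denotes the pointwise inverse matrix field. -/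

import Mathlib

open scoped BigOperators

section Defs

variable {ι : Type*} [Fintype ι] [DecidableEq ι]

/-- Partial derivative of a scalar function in the `i`-th coordinate direction. -/
noncomputable def pd (i : ι) (f : (ι → ℝ) → ℝ) (u : ι → ℝ) : ℝ :=
  fderiv ℝ f u (Pi.single i 1)

/-- Lie bracket of two vector fields on `ι → ℝ`. -/
noncomputable def lieBr (X Y : (ι → ℝ) → (ι → ℝ)) (u : ι → ℝ) : ι → ℝ :=
  fun i => ∑ s, (X u s * pd s (fun v => Y v i) u - Y u s * pd s (fun v => X v i) u)

/-- Nijenhuis torsion of a pointwise operator `L` (applied pointwise to vector fields):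
`N_L(X,Y) = [LX,LY] − L[LX,Y] − L[X,LY] + L²[X,Y]`. -/
noncomputable def nij (L : (ι → ℝ) → (ι → ℝ) → (ι → ℝ))
    (X Y : (ι → ℝ) → (ι → ℝ)) (u : ι → ℝ) : ι → ℝ :=
  lieBr (fun v => L v (X v)) (fun v => L v (Y v)) u
  - L u (lieBr (fun v => L v (X v)) Y u)
  - L u (lieBr X (fun v => L v (Y v)) u)
  + L u (L u (lieBr X Y u))

end Defs

section Helper

variable {ι : Type*} [Fintype ι] [DecidableEq ι]

lemma pd_congr {f g : (ι → ℝ) → ℝ} {u : ι → ℝ} (h : f =ᶠ[nhds u] g) (i : ι) :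
    pd i f u = pd i g u := by
  unfold pd; rw [Filter.EventuallyEq.fderiv_eq h]

lemma pd_const (i : ι) (c : ℝ) (u : ι → ℝ) : pd i (fun _ => c) u = 0 := by
  simp [pd]

lemma pd_sum {κ : Type*} [Fintype κ] (i : ι) (f : κ → (ι → ℝ) → ℝ) (u : ι → ℝ)
    (h : ∀ k, DifferentiableAt ℝ (f k) u) :
    pd i (fun v => ∑ k, f k v) u = ∑ k, pd i (f k) u := by
  unfold pd
  rw [show (fun v => ∑ k, f k v) = (fun v => ∑ k, (fun w => f k w) v) from rfl,
    fderiv_fun_sum (fun k _ => h k)]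
  simp

lemma pd_mul {f g : (ι → ℝ) → ℝ} {u : ι → ℝ} (i : ι)
    (hf : DifferentiableAt ℝ f u) (hg : DifferentiableAt ℝ g u) :
    pd i (fun v => f v * g v) u = pd i f u * g u + f u * pd i g u := by
  unfold pd
  rw [fderiv_fun_mul hf hg]
  simp [mul_comm]
  ring

lemma contDiffAt_pd {V : (ι → ℝ) → ℝ} {u : ι → ℝ} (hV : ContDiffAt ℝ (⊤ : ℕ∞) V u) (s : ι) :
    ContDiffAt ℝ (⊤ : ℕ∞) (fun v => pd s V v) u := by
  have h1 : ContDiffAt ℝ (⊤ : ℕ∞) (fderiv ℝ V) u := hV.fderiv_right (by simp)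
  exact h1.clm_apply contDiffAt_const

lemma pd_pd_symm {V : (ι → ℝ) → ℝ} {u : ι → ℝ} (hV : ContDiffAt ℝ (⊤ : ℕ∞) V u) (s p : ι) :
    pd p (fun v => pd s V v) u = pd s (fun v => pd p V v) u := by
  have hsym : IsSymmSndFDerivAt ℝ V u := hV.isSymmSndFDerivAt
    (by rw [minSmoothness_of_isRCLikeNormedField]; exact WithTop.coe_le_coe.mpr (le_top : (2 : ℕ∞) ≤ ⊤))
  have h1 : ContDiffAt ℝ (⊤ : ℕ∞) (fderiv ℝ V) u := hV.fderiv_right (by simp)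
  have hd : DifferentiableAt ℝ (fderiv ℝ V) u := h1.differentiableAt (by simp)
  have key : ∀ a b : ι, pd a (fun v => pd b V v) u
      = fderiv ℝ (fderiv ℝ V) u (Pi.single a 1) (Pi.single b 1) := by
    intro a b
    unfold pd
    rw [fderiv_clm_apply hd (differentiableAt_const _)]
    simp
  rw [key, key, hsym]

lemma contDiffAt_det {A : (ι → ℝ) → Matrix ι ι ℝ} {u : ι → ℝ}
    (h : ∀ i j, ContDiffAt ℝ (⊤ : ℕ∞) (fun v => A v i j) u) :
    ContDiffAt ℝ (⊤ : ℕ∞) (fun v => (A v).det) u := by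
  simp_rw [Matrix.det_apply']
  exact ContDiffAt.sum (fun σ _ => contDiffAt_const.mul
    (contDiffAt_prod (fun k _ => h _ _)))

lemma contDiffAt_inv_entry {A : (ι → ℝ) → Matrix ι ι ℝ} {u : ι → ℝ}
    (h : ∀ i j, ContDiffAt ℝ (⊤ : ℕ∞) (fun v => A v i j) u) (hdet : (A u).det ≠ 0) (i j : ι) :
    ContDiffAt ℝ (⊤ : ℕ∞) (fun v => (A v)⁻¹ i j) u := by
  have hadj : ContDiffAt ℝ (⊤ : ℕ∞) (fun v => (A v).adjugate i j) u := by
    simp_rw [Matrix.adjugate_apply]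
    apply contDiffAt_det
    intro a b
    simp only [Matrix.updateRow_apply]
    by_cases ha : a = j
    · simp only [ha, if_true, if_pos]; exact contDiffAt_const
    · simp only [ha, if_false]; exact h a b
  have hdetC : ContDiffAt ℝ (⊤ : ℕ∞) (fun v => ((A v).det)⁻¹) u :=
    (contDiffAt_det h).inv hdet
  have : ContDiffAt ℝ (⊤ : ℕ∞) (fun v => ((A v).det)⁻¹ * (A v).adjugate i j) u := hdetC.mul hadj
  refine this.congr_of_eventuallyEq ?_
  filter_upwards with v
  rw [Matrix.inv_def, Matrix.smul_apply, Ring.inverse_eq_inv', smul_eq_mul]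

/-- exchange of summation for a contraction pattern -/
lemma exchange {n : ℕ} (A : Fin n → Fin n → ℝ) (X Y : Fin n → ℝ) :
    ∑ a, (∑ t, A t a * X t) * Y a = ∑ t, (∑ a, A t a * Y a) * X t := by
  simp_rw [Finset.sum_mul]
  rw [Finset.sum_comm]
  refine Finset.sum_congr rfl fun t _ => Finset.sum_congr rfl fun a _ => by ring

lemma contract {n : ℕ} {B M : Fin n → Fin n → ℝ}
    (hdelta : ∀ t i, ∑ a, B t a * M a i = if t = i then 1 else 0)
    (X : Fin n → ℝ) (i : Fin n) :
    ∑ a, (∑ t, B t a * X t) * M a i = X i := by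
  rw [exchange]
  simp [hdelta, ite_mul]

end Helper

section NijCoord

lemma nijCoord {n : ℕ} {U : Set (Fin n → ℝ)}
    {L : (Fin n → ℝ) → Matrix (Fin n) (Fin n) ℝ}
    (hN : ∀ X Y : (Fin n → ℝ) → (Fin n → ℝ),
      ContDiffOn ℝ (⊤ : ℕ∞) X U → ContDiffOn ℝ (⊤ : ℕ∞) Y U →
      ∀ u ∈ U, nij (fun v w => (L v).mulVec w) X Y u = 0)
    {u : Fin n → ℝ} (hu : u ∈ U) (a b c : Fin n) :
    (∑ s, L u s a * pd s (fun v => L v c b) u) - (∑ s, L u s b * pd s (fun v => L v c a) u)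
    + ((∑ s, L u c s * pd b (fun v => L v s a) u) - ∑ s, L u c s * pd a (fun v => L v s b) u)
    = 0 := by
  have hXY := hN (fun _ => Pi.single a 1) (fun _ => Pi.single b 1)
    contDiffOn_const contDiffOn_const u hu
  have h := congrFun hXY c
  simp only [nij, lieBr, Pi.add_apply, Pi.sub_apply, Matrix.mulVec_single_one,
    show ∀ v k, (L v).col k = fun i => L v i k from fun _ _ => rfl, mul_one,
    pd_const, mul_zero, zero_mul, sub_zero, zero_sub, Finset.sum_neg_distrib,
    Pi.single_apply, Pi.zero_apply] at h
  have e1 : lieBr (fun v i => L v i a) (fun _ => Pi.single b 1) u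
      = fun i => -pd b (fun v => L v i a) u := by
    funext i
    simp [lieBr, pd_const, Pi.single_apply, Finset.sum_sub_distrib]
  have e2 : lieBr (fun _ => Pi.single a 1) (fun v i => L v i b) u
      = fun i => pd a (fun v => L v i b) u := by
    funext i
    simp [lieBr, pd_const, Pi.single_apply, Finset.sum_sub_distrib]
  have e3 : lieBr (fun _ : Fin n → ℝ => (Pi.single a 1 : Fin n → ℝ)) (fun _ => Pi.single b 1) u
      = 0 := by
    funext i
    simp [lieBr, pd_const]
  rw [e1, e2, e3] at h
  simp only [Matrix.mulVec, dotProduct, Matrix.mulVec_zero, Pi.zero_apply, mul_neg] at h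
  simp only [mul_zero, Finset.sum_const_zero, add_zero, Finset.sum_neg_distrib,
    sub_neg_eq_add, Finset.sum_sub_distrib] at h
  linarith [h]

end NijCoord


section AlgebraKey

lemma contract' {n : ℕ} {B C : Fin n → Fin n → ℝ}
    (hd : ∀ s t, ∑ c, C s c * B c t = if s = t then 1 else 0)
    (X : Fin n → ℝ) (s : Fin n) :
    ∑ c, C s c * (∑ t, B c t * X t) = X s := by
  simp_rw [Finset.mul_sum]
  rw [Finset.sum_comm]
  have : ∀ t, ∑ c, C s c * (B c t * X t) = (if s = t then 1 else 0) * X t := by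
    intro t
    rw [← hd s t, Finset.sum_mul]
    exact Finset.sum_congr rfl fun c _ => by ring
  simp_rw [this]
  simp [ite_mul]

lemma algebra_key {n : ℕ} (Lm M : Matrix (Fin n) (Fin n) ℝ)
    (l m : Fin n → Fin n → Fin n → ℝ) (Vd : Fin n → ℝ) (W : Fin n → Fin n → ℝ)
    (hLM : ∀ a b, ∑ s, Lm a s * M s b = if a = b then 1 else 0)
    (hML : ∀ a b, ∑ s, M a s * Lm s b = if a = b then 1 else 0)
    (hm : ∀ p a b, m p a b = -∑ c, M a c * ∑ s, l p c s * M s b)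
    (hnij : ∀ a b c, (∑ s, Lm s a * l s c b) - (∑ s, Lm s b * l s c a)
        + ((∑ s, Lm c s * l b s a) - ∑ s, Lm c s * l a s b) = 0)
    (hW : ∀ s p, W s p = W p s) (i j : Fin n) :
    (∑ s, (m i s j * Vd s + M s j * W s i)) - (∑ s, (m j s i * Vd s + M s i * W s j))
    = -∑ p, ∑ q, M p i * (M q j * ((∑ s, (l p s q * Vd s + Lm s q * W s p))
        - ∑ s, (l q s p * Vd s + Lm s p * W s q))) := by
  -- delta facts reorganized
  have hLMd : ∀ t i, ∑ a, Lm t a * M a i = if t = i then 1 else 0 := hLM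
  -- contracted Nijenhuis
  have h1 : ∀ c, (∑ b, l i c b * M b j) - (∑ a, l j c a * M a i)
      = ∑ a, ∑ b, M a i * (M b j * ((∑ t, Lm c t * l a t b) - ∑ t, Lm c t * l b t a)) := by
    intro c
    have hstep : ∀ a b : Fin n,
        M a i * (M b j * ((∑ t, Lm c t * l a t b) - ∑ t, Lm c t * l b t a))
        = M a i * (M b j * ((∑ t, Lm t a * l t c b) - ∑ t, Lm t b * l t c a)) := by
      intro a b
      have := hnij a b c
      have h2 : (∑ t, Lm c t * l a t b) - ∑ t, Lm c t * l b t a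
          = (∑ t, Lm t a * l t c b) - ∑ t, Lm t b * l t c a := by linarith
      rw [h2]
    simp_rw [hstep]
    -- now collapse the double contraction
    have hc1 : ∀ b, ∑ a, M a i * (M b j * (∑ t, Lm t a * l t c b))
        = M b j * l i c b := by
      intro b
      have : ∑ a, M a i * (M b j * (∑ t, Lm t a * l t c b))
          = M b j * ∑ a, (∑ t, Lm t a * (fun t => l t c b) t) * M a i := by
        rw [Finset.mul_sum]
        exact Finset.sum_congr rfl fun a _ => by ring
      rw [this, contract hLMd]
    have hc2 : ∀ a, ∑ b, M b j * (M a i * (∑ t, Lm t b * l t c a))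
        = M a i * l j c a := by
      intro a
      have : ∑ b, M b j * (M a i * (∑ t, Lm t b * l t c a))
          = M a i * ∑ b, (∑ t, Lm t b * (fun t => l t c a) t) * M b j := by
        rw [Finset.mul_sum]
        exact Finset.sum_congr rfl fun b _ => by ring
      rw [this, contract hLMd]
    calc (∑ b, l i c b * M b j) - (∑ a, l j c a * M a i)
        = (∑ b, ∑ a, M a i * (M b j * (∑ t, Lm t a * l t c b)))
          - (∑ a, ∑ b, M b j * (M a i * (∑ t, Lm t b * l t c a))) := by
          rw [Finset.sum_congr rfl fun b _ => hc1 b, Finset.sum_congr rfl fun a _ => hc2 a]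
          refine congrArg₂ (· - ·) ?_ ?_ <;>
            exact Finset.sum_congr rfl fun _ _ => by ring
    _ = ∑ a, ∑ b, M a i * (M b j * ((∑ t, Lm t a * l t c b) - ∑ t, Lm t b * l t c a)) := by
          rw [Finset.sum_comm (f := fun b a => M a i * (M b j * (∑ t, Lm t a * l t c b)))]
          rw [← Finset.sum_sub_distrib]
          refine Finset.sum_congr rfl fun a _ => ?_
          rw [← Finset.sum_sub_distrib]
          refine Finset.sum_congr rfl fun b _ => by ring
  -- contracted Nijenhuis, fully contracted form
  have hcn : ∀ s : Fin n, ∑ p, ∑ q, M p i * (M q j * (l p s q - l q s p))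
      = ∑ c, M s c * ((∑ b, l i c b * M b j) - ∑ a, l j c a * M a i) := by
    intro s
    have e1 : ∀ a b : Fin n, ∑ c, M s c * ((∑ t, Lm c t * l a t b) - ∑ t, Lm c t * l b t a)
        = l a s b - l b s a := by
      intro a b
      have h2 : ∀ c, M s c * ((∑ t, Lm c t * l a t b) - ∑ t, Lm c t * l b t a)
          = M s c * (∑ t, Lm c t * (l a t b - l b t a)) := by
        intro c
        congr 1
        rw [← Finset.sum_sub_distrib]
        exact Finset.sum_congr rfl fun t _ => by ring
      simp_rw [h2]
      exact contract' hML (fun t => l a t b - l b t a) s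
    symm
    calc ∑ c, M s c * ((∑ b, l i c b * M b j) - ∑ a, l j c a * M a i)
        = ∑ c, ∑ a, ∑ b, M s c * (M a i * (M b j *
            ((∑ t, Lm c t * l a t b) - ∑ t, Lm c t * l b t a))) := by
          refine Finset.sum_congr rfl fun c _ => ?_
          rw [h1 c, Finset.mul_sum]
          refine Finset.sum_congr rfl fun a _ => ?_
          rw [Finset.mul_sum]
    _ = ∑ a, ∑ b, ∑ c, M s c * (M a i * (M b j *
            ((∑ t, Lm c t * l a t b) - ∑ t, Lm c t * l b t a))) := by
          rw [Finset.sum_comm]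
          exact Finset.sum_congr rfl fun a _ => Finset.sum_comm
    _ = ∑ a, ∑ b, M a i * (M b j * (∑ c, M s c *
            ((∑ t, Lm c t * l a t b) - ∑ t, Lm c t * l b t a))) := by
          refine Finset.sum_congr rfl fun a _ => Finset.sum_congr rfl fun b _ => ?_
          rw [Finset.mul_sum, Finset.mul_sum]
          exact Finset.sum_congr rfl fun c _ => by ring
    _ = ∑ p, ∑ q, M p i * (M q j * (l p s q - l q s p)) := by
          refine Finset.sum_congr rfl fun a _ => Finset.sum_congr rfl fun b _ => ?_
          rw [e1 a b]
  have hm' : ∀ s, m i s j - m j s i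
      = -∑ c, M s c * ((∑ b, l i c b * M b j) - ∑ a, l j c a * M a i) := by
    intro s
    rw [hm i s j, hm j s i]
    have h3 : ∀ c, M s c * ((∑ b, l i c b * M b j) - ∑ a, l j c a * M a i)
        = M s c * (∑ b, l i c b * M b j) - M s c * (∑ a, l j c a * M a i) :=
      fun c => mul_sub _ _ _
    simp_rw [h3, Finset.sum_sub_distrib]
    ring
  have hbrack : ∀ s, (m i s j - m j s i)
      + ∑ p, ∑ q, M p i * (M q j * (l p s q - l q s p)) = 0 := by
    intro s
    rw [hcn s, hm' s]
    ring
  have hsplit : ∑ p, ∑ q, M p i * (M q j * ((∑ s, (l p s q * Vd s + Lm s q * W s p))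
        - ∑ s, (l q s p * Vd s + Lm s p * W s q)))
      = (∑ s, (∑ p, ∑ q, M p i * (M q j * (l p s q - l q s p))) * Vd s)
        + ((∑ p, M p i * W j p) - ∑ q, M q j * W i q) := by
    have e0 : ∀ p q : Fin n, M p i * (M q j * ((∑ s, (l p s q * Vd s + Lm s q * W s p))
        - ∑ s, (l q s p * Vd s + Lm s p * W s q)))
        = (∑ s, M p i * (M q j * ((l p s q - l q s p) * Vd s)))
          + ((∑ s, M p i * (M q j * (Lm s q * W s p)))
            - ∑ s, M p i * (M q j * (Lm s p * W s q))) := by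
      intro p q
      calc M p i * (M q j * ((∑ s, (l p s q * Vd s + Lm s q * W s p))
          - ∑ s, (l q s p * Vd s + Lm s p * W s q)))
          = ∑ s, M p i * (M q j * ((l p s q * Vd s + Lm s q * W s p)
              - (l q s p * Vd s + Lm s p * W s q))) := by
            rw [← Finset.sum_sub_distrib, Finset.mul_sum, Finset.mul_sum]
      _ = _ := by
            rw [← Finset.sum_sub_distrib, ← Finset.sum_add_distrib]
            exact Finset.sum_congr rfl fun s _ => by ring
    simp_rw [e0]
    simp only [Finset.sum_add_distrib, Finset.sum_sub_distrib]
    have hA : ∑ p, ∑ q, ∑ s, M p i * (M q j * ((l p s q - l q s p) * Vd s))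
        = ∑ s, (∑ p, ∑ q, M p i * (M q j * (l p s q - l q s p))) * Vd s := by
      calc ∑ p, ∑ q, ∑ s, M p i * (M q j * ((l p s q - l q s p) * Vd s))
          = ∑ s, ∑ p, ∑ q, M p i * (M q j * ((l p s q - l q s p) * Vd s)) :=
            (Finset.sum_congr rfl fun p _ => Finset.sum_comm).trans Finset.sum_comm
      _ = _ := by
          refine Finset.sum_congr rfl fun s _ => ?_
          simp_rw [Finset.sum_mul]
          exact Finset.sum_congr rfl fun p _ => Finset.sum_congr rfl fun q _ => by ring
    have hB : ∑ p, ∑ q, ∑ s, M p i * (M q j * (Lm s q * W s p)) = ∑ p, M p i * W j p := by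
      refine Finset.sum_congr rfl fun p _ => ?_
      calc ∑ q, ∑ s, M p i * (M q j * (Lm s q * W s p))
          = ∑ s, (∑ q, Lm s q * M q j) * (M p i * W s p) := by
            rw [Finset.sum_comm]
            refine Finset.sum_congr rfl fun s _ => ?_
            rw [Finset.sum_mul]
            exact Finset.sum_congr rfl fun q _ => by ring
      _ = M p i * W j p := by simp [hLM, ite_mul]
    have hC : ∑ p, ∑ q, ∑ s, M p i * (M q j * (Lm s p * W s q)) = ∑ q, M q j * W i q := by
      calc ∑ p, ∑ q, ∑ s, M p i * (M q j * (Lm s p * W s q))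
          = ∑ q, ∑ p, ∑ s, M p i * (M q j * (Lm s p * W s q)) := Finset.sum_comm
      _ = ∑ q, M q j * W i q := by
          refine Finset.sum_congr rfl fun q _ => ?_
          calc ∑ p, ∑ s, M p i * (M q j * (Lm s p * W s q))
              = ∑ s, (∑ p, Lm s p * M p i) * (M q j * W s q) := by
                rw [Finset.sum_comm]
                refine Finset.sum_congr rfl fun s _ => ?_
                rw [Finset.sum_mul]
                exact Finset.sum_congr rfl fun p _ => by ring
          _ = M q j * W i q := by simp [hLM, ite_mul]
    rw [hA, hB, hC]
  rw [eq_neg_iff_add_eq_zero, hsplit]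
  have hw1 : ∑ s, M s j * W s i = ∑ q, M q j * W i q :=
    Finset.sum_congr rfl fun s _ => by rw [hW s i]
  have hw2 : ∑ s, M s i * W s j = ∑ p, M p i * W j p :=
    Finset.sum_congr rfl fun s _ => by rw [hW s j]
  have hv : (∑ s, m i s j * Vd s) - (∑ s, m j s i * Vd s)
      + ∑ s, (∑ p, ∑ q, M p i * (M q j * (l p s q - l q s p))) * Vd s = 0 := by
    rw [← Finset.sum_sub_distrib, ← Finset.sum_add_distrib]
    apply Finset.sum_eq_zero
    intro s _
    calc m i s j * Vd s - m j s i * Vd s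
          + (∑ p, ∑ q, M p i * (M q j * (l p s q - l q s p))) * Vd s
        = ((m i s j - m j s i)
            + ∑ p, ∑ q, M p i * (M q j * (l p s q - l q s p))) * Vd s := by ring
    _ = 0 := by rw [hbrack s, zero_mul]
  simp only [Finset.sum_add_distrib]
  linarith [hv, hw1, hw2]


end AlgebraKey

theorem keyIdentity {n : ℕ} (U : Set (Fin n → ℝ)) (hU : IsOpen U)
    (L : (Fin n → ℝ) → Matrix (Fin n) (Fin n) ℝ)
    (hL : ∀ i j : Fin n, ContDiffOn ℝ (⊤ : ℕ∞) (fun u => L u i j) U)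
    (hinv : ∀ u ∈ U, IsUnit (L u))
    (hN : ∀ X Y : (Fin n → ℝ) → (Fin n → ℝ),
      ContDiffOn ℝ (⊤ : ℕ∞) X U → ContDiffOn ℝ (⊤ : ℕ∞) Y U →
      ∀ u ∈ U, nij (fun v w => (L v).mulVec w) X Y u = 0)
    (V : (Fin n → ℝ) → ℝ) (hV : ContDiffOn ℝ (⊤ : ℕ∞) V U)
    (u : Fin n → ℝ) (hu : u ∈ U) (i j : Fin n) :
    pd i (fun v => ∑ s, (L v)⁻¹ s j * pd s V v) u
      - pd j (fun v => ∑ s, (L v)⁻¹ s i * pd s V v) u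
    = -∑ p, ∑ q, (L u)⁻¹ p i * ((L u)⁻¹ q j *
        (pd p (fun v => ∑ s, L v s q * pd s V v) u
          - pd q (fun v => ∑ s, L v s p * pd s V v) u)) := by
  have hnhds : U ∈ nhds u := hU.mem_nhds hu
  have hLat : ∀ a b, ContDiffAt ℝ (⊤ : ℕ∞) (fun v => L v a b) u :=
    fun a b => (hL a b).contDiffAt hnhds
  have hVat : ContDiffAt ℝ (⊤ : ℕ∞) V u := hV.contDiffAt hnhds
  have hdetu : IsUnit (L u).det := (Matrix.isUnit_iff_isUnit_det _).mp (hinv u hu)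
  have hdetne : (L u).det ≠ 0 := hdetu.ne_zero
  have hMat : ∀ a b, ContDiffAt ℝ (⊤ : ℕ∞) (fun v => (L v)⁻¹ a b) u :=
    fun a b => contDiffAt_inv_entry hLat hdetne a b
  have hVp : ∀ s, ContDiffAt ℝ (⊤ : ℕ∞) (fun v => pd s V v) u := fun s => contDiffAt_pd hVat s
  have hLd : ∀ a b, DifferentiableAt ℝ (fun v => L v a b) u :=
    fun a b => (hLat a b).differentiableAt (by simp)
  have hMd : ∀ a b, DifferentiableAt ℝ (fun v => (L v)⁻¹ a b) u :=
    fun a b => (hMat a b).differentiableAt (by simp)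
  have hVpd : ∀ s, DifferentiableAt ℝ (fun v => pd s V v) u :=
    fun s => (hVp s).differentiableAt (by simp)
  have expL : ∀ p q : Fin n, pd p (fun v => ∑ s, L v s q * pd s V v) u
      = ∑ s, ((pd p (fun v => L v s q) u) * pd s V u
          + L u s q * pd p (fun v => pd s V v) u) := by
    intro p q
    rw [pd_sum p (fun s v => L v s q * pd s V v) u (fun s => (hLd s q).mul (hVpd s))]
    exact Finset.sum_congr rfl fun s _ => pd_mul p (hLd s q) (hVpd s)
  have expM : ∀ p q : Fin n, pd p (fun v => ∑ s, (L v)⁻¹ s q * pd s V v) u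
      = ∑ s, ((pd p (fun v => (L v)⁻¹ s q) u) * pd s V u
          + (L u)⁻¹ s q * pd p (fun v => pd s V v) u) := by
    intro p q
    rw [pd_sum p (fun s v => (L v)⁻¹ s q * pd s V v) u (fun s => (hMd s q).mul (hVpd s))]
    exact Finset.sum_congr rfl fun s _ => pd_mul p (hMd s q) (hVpd s)
  have hLM : ∀ a b : Fin n, ∑ s, L u a s * (L u)⁻¹ s b = if a = b then 1 else 0 := by
    intro a b
    have h1 : L u * (L u)⁻¹ = 1 := Matrix.mul_nonsing_inv _ hdetu
    have h2 := congrFun (congrFun h1 a) b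
    rw [Matrix.mul_apply] at h2
    rw [h2, Matrix.one_apply]
  have hML : ∀ a b : Fin n, ∑ s, (L u)⁻¹ a s * L u s b = if a = b then 1 else 0 := by
    intro a b
    have h1 : (L u)⁻¹ * L u = 1 := Matrix.nonsing_inv_mul _ hdetu
    have h2 := congrFun (congrFun h1 a) b
    rw [Matrix.mul_apply] at h2
    rw [h2, Matrix.one_apply]
  have hrel : ∀ p c b : Fin n, ∑ s, ((pd p (fun v => L v c s) u) * (L u)⁻¹ s b
      + L u c s * pd p (fun v => (L v)⁻¹ s b) u) = 0 := by
    intro p c b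
    have hconst : (fun v => ∑ s, L v c s * (L v)⁻¹ s b)
        =ᶠ[nhds u] (fun _ => if c = b then (1:ℝ) else 0) := by
      filter_upwards [hnhds] with v hv
      have h1 : L v * (L v)⁻¹ = 1 :=
        Matrix.mul_nonsing_inv _ ((Matrix.isUnit_iff_isUnit_det _).mp (hinv v hv))
      have h2 := congrFun (congrFun h1 c) b
      rw [Matrix.mul_apply] at h2
      rw [h2, Matrix.one_apply]
    have h0 : pd p (fun v => ∑ s, L v c s * (L v)⁻¹ s b) u = 0 := by
      rw [pd_congr hconst p, pd_const]
    calc ∑ s, ((pd p (fun v => L v c s) u) * (L u)⁻¹ s b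
        + L u c s * pd p (fun v => (L v)⁻¹ s b) u)
        = pd p (fun v => ∑ s, L v c s * (L v)⁻¹ s b) u := by
          rw [pd_sum p (fun s v => L v c s * (L v)⁻¹ s b) u
            (fun s => (hLd c s).mul (hMd s b))]
          exact (Finset.sum_congr rfl fun s _ => (pd_mul p (hLd c s) (hMd s b))).symm
    _ = 0 := h0
  have hminv : ∀ p a b : Fin n, pd p (fun v => (L v)⁻¹ a b) u
      = -∑ c, (L u)⁻¹ a c * ∑ s, (pd p (fun v => L v c s) u) * (L u)⁻¹ s b := by
    intro p a b
    have e1 : ∀ c : Fin n, ∑ s, L u c s * pd p (fun v => (L v)⁻¹ s b) u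
        = -∑ s, (pd p (fun v => L v c s) u) * (L u)⁻¹ s b := by
      intro c
      have h4 := hrel p c b
      rw [Finset.sum_add_distrib] at h4
      linarith
    calc pd p (fun v => (L v)⁻¹ a b) u
        = ∑ c, (L u)⁻¹ a c * (∑ t, L u c t * pd p (fun v => (L v)⁻¹ t b) u) :=
          (contract' hML (fun t => pd p (fun v => (L v)⁻¹ t b) u) a).symm
    _ = ∑ c, (L u)⁻¹ a c * (-∑ s, (pd p (fun v => L v c s) u) * (L u)⁻¹ s b) :=
          Finset.sum_congr rfl fun c _ => by rw [e1 c]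
    _ = -∑ c, (L u)⁻¹ a c * ∑ s, (pd p (fun v => L v c s) u) * (L u)⁻¹ s b := by
          simp_rw [mul_neg]
          rw [Finset.sum_neg_distrib]
  have hWsym : ∀ s p2 : Fin n, pd p2 (fun v => pd s V v) u = pd s (fun v => pd p2 V v) u :=
    fun s p2 => pd_pd_symm hVat s p2
  have hnijc := fun a b c => nijCoord hN hu a b c
  have KEY := algebra_key (L u) ((L u)⁻¹)
    (fun p c d => pd p (fun v => L v c d) u)
    (fun p c d => pd p (fun v => (L v)⁻¹ c d) u)
    (fun s => pd s V u)
    (fun s p => pd p (fun v => pd s V v) u)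
    hLM hML hminv hnijc (fun s p2 => hWsym s p2) i j
  rw [expM i j, expM j i]
  simp_rw [expL]
  exact KEY


open Matrix in
/-- for a smooth, pointwise invertible matrix field `L` with vanishing
Nijenhuis torsion on `U` and a smooth function `V`, the 1-form `d_L V` is closed iff the
1-form `d_{L⁻¹} V` is closed. -/
theorem stmt18 {n : ℕ} (U : Set (Fin n → ℝ)) (hU : IsOpen U)
    (L : (Fin n → ℝ) → Matrix (Fin n) (Fin n) ℝ)
    (hL : ∀ i j : Fin n, ContDiffOn ℝ (⊤ : ℕ∞) (fun u => L u i j) U)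
    (hinv : ∀ u ∈ U, IsUnit (L u))
    (hN : ∀ X Y : (Fin n → ℝ) → (Fin n → ℝ),
      ContDiffOn ℝ (⊤ : ℕ∞) X U → ContDiffOn ℝ (⊤ : ℕ∞) Y U →
      ∀ u ∈ U, nij (fun v w => (L v).mulVec w) X Y u = 0)
    (V : (Fin n → ℝ) → ℝ) (hV : ContDiffOn ℝ (⊤ : ℕ∞) V U) :
    (∀ i j : Fin n, ∀ u ∈ U,
      pd i (fun v => ∑ s, L v s j * pd s V v) u
        = pd j (fun v => ∑ s, L v s i * pd s V v) u)
    ↔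
    (∀ i j : Fin n, ∀ u ∈ U,
      pd i (fun v => ∑ s, (L v)⁻¹ s j * pd s V v) u
        = pd j (fun v => ∑ s, (L v)⁻¹ s i * pd s V v) u) := by
  constructor
  · intro h i j u hu
    have k := keyIdentity U hU L hL hinv hN V hV u hu i j
    rw [← sub_eq_zero, k, neg_eq_zero]
    apply Finset.sum_eq_zero
    intro p _
    apply Finset.sum_eq_zero
    intro q _
    rw [sub_eq_zero.mpr (h p q u hu)]
    ring
  · intro h i j u hu
    have hz : ∀ a b : Fin n, ∑ p, ∑ q, (L u)⁻¹ p a * ((L u)⁻¹ q b *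
        (pd p (fun v => ∑ s, L v s q * pd s V v) u
          - pd q (fun v => ∑ s, L v s p * pd s V v) u)) = 0 := by
      intro a b
      have k := keyIdentity U hU L hL hinv hN V hV u hu a b
      rw [sub_eq_zero.mpr (h a b u hu)] at k
      linarith [k]
    have hmat : ((L u)⁻¹)ᵀ * (Matrix.of fun p q =>
        pd p (fun v => ∑ s, L v s q * pd s V v) u
          - pd q (fun v => ∑ s, L v s p * pd s V v) u) * (L u)⁻¹ = 0 := by
      ext a b
      rw [Matrix.zero_apply, ← hz a b]
      simp_rw [Matrix.mul_apply, Matrix.transpose_apply, Matrix.of_apply, Finset.sum_mul]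
      rw [Finset.sum_comm]
      refine Finset.sum_congr rfl fun p _ => Finset.sum_congr rfl fun q _ => by ring
    have hMunit : IsUnit ((L u)⁻¹) := (Matrix.isUnit_nonsing_inv_iff).mpr (hinv u hu)
    have hMTunit : IsUnit (((L u)⁻¹)ᵀ) := (Matrix.isUnit_transpose _).mpr hMunit
    obtain ⟨w, hw⟩ := hMTunit
    obtain ⟨w2, hw2⟩ := hMunit
    have hA0 : (Matrix.of fun p q =>
        pd p (fun v => ∑ s, L v s q * pd s V v) u
          - pd q (fun v => ∑ s, L v s p * pd s V v) u)
        = (0 : Matrix (Fin n) (Fin n) ℝ) := by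
      set A : Matrix (Fin n) (Fin n) ℝ := Matrix.of fun p q =>
        pd p (fun v => ∑ s, L v s q * pd s V v) u
          - pd q (fun v => ∑ s, L v s p * pd s V v) u
      have h1 : A * (L u)⁻¹ = 0 := by
        calc A * (L u)⁻¹ = (↑w⁻¹ * ((L u)⁻¹)ᵀ) * (A * (L u)⁻¹) := by
              rw [← hw, w.inv_mul, one_mul]
        _ = ↑w⁻¹ * (((L u)⁻¹)ᵀ * A * (L u)⁻¹) := by noncomm_ring
        _ = 0 := by rw [hmat, mul_zero]
      calc A = A * ((L u)⁻¹ * ↑w2⁻¹) := by rw [← hw2]; rw [w2.mul_inv, mul_one]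
      _ = (A * (L u)⁻¹) * ↑w2⁻¹ := by rw [mul_assoc]
      _ = 0 := by rw [h1, zero_mul]
    have := congrFun (congrFun hA0 i) j
    simp only [Matrix.of_apply, Matrix.zero_apply] at this
    linarith [this]
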